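/- Let k ≥ 1, let E be a finite type of edges with cost function c : E → ℝ, and let x, y : Fin k → E be the sequences of deleted and added edges of a k-opt move whose total gain is strictly positive, ∑_{ℓ=0}^{k-1} (c(x(ℓ)) − c(y(ℓ))) > 0. Then there exists a cyclic relabeling of the exchange pairs fulfilling the positive gain criterion: there is j ∈ Fin k such that for every i with 1 ≤ i ≤ k, the partial gain ∑_{ℓ=0}^{i-1} (c(x((j+ℓ) mod k)) − c(y((j+ℓ) mod k))) is strictly positive. -/
import Mathlib


/-- If a `k`-opt move with deleted edges `x ℓ` and added edges `y ℓ` has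
strictly positive total gain `∑ (c (x ℓ) - c (y ℓ)) > 0`, then there is a
cyclic relabeling of the exchange pairs under which every partial gain is
strictly positive, i.e. the positive gain criterion holds at every step. -/
theorem kopt_cyclic_relabeling_positive_gain
    (k : ℕ) (hk : 1 ≤ k) {E : Type*} [Fintype E] (c : E → ℝ)
    (x y : Fin k → E)
    (hsum : 0 < ∑ ℓ, (c (x ℓ) - c (y ℓ))) :
    ∃ j : Fin k, ∀ i : ℕ, 1 ≤ i → i ≤ k →
      0 < ∑ ℓ ∈ Finset.range i,
        (c (x ⟨((j : ℕ) + ℓ) % k, Nat.mod_lt _ (by omega)⟩) -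
         c (y ⟨((j : ℕ) + ℓ) % k, Nat.mod_lt _ (by omega)⟩)) := by
  -- the gain sequence, extended periodically to all of ℕ
  set g : ℕ → ℝ := fun n =>
    c (x ⟨n % k, Nat.mod_lt _ (by omega)⟩) - c (y ⟨n % k, Nat.mod_lt _ (by omega)⟩) with hg
  -- partial sums
  set S : ℕ → ℝ := fun n => ∑ ℓ ∈ Finset.range n, g ℓ with hS
  have hgper : ∀ n, g (k + n) = g n := by
    intro n
    simp only [hg, Nat.add_mod_left]
  have hSadd : ∀ a b, S (a + b) = S a + ∑ ℓ ∈ Finset.range b, g (a + ℓ) := by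
    intro a b
    induction b with
    | zero => simp
    | succ b ih =>
        rw [← Nat.add_assoc]
        simp only [hS] at ih ⊢
        rw [Finset.sum_range_succ, ih, Finset.sum_range_succ]
        ring
  have hSk : 0 < S k := by
    have : S k = ∑ ℓ : Fin k, (c (x ℓ) - c (y ℓ)) := by
      simp only [hS]
      rw [← Fin.sum_univ_eq_sum_range]
      refine Finset.sum_congr rfl fun ℓ _ => ?_
      simp only [hg]
      congr 1 <;> congr 1 <;> exact congrArg _ (Fin.ext (Nat.mod_eq_of_lt ℓ.isLt))
    rw [this]; exact hsum
  -- the set of minimizers of S on [0, k)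
  obtain ⟨j0, hj0mem, hj0min⟩ :=
    Finset.exists_min_image (Finset.range k) S ⟨0, by simp; omega⟩
  set A := (Finset.range k).filter (fun i => ∀ m ∈ Finset.range k, S i ≤ S m) with hA
  have hAne : A.Nonempty := ⟨j0, by simp only [hA, Finset.mem_filter]; exact ⟨hj0mem, hj0min⟩⟩
  set j := A.max' hAne with hj
  have hjA : j ∈ A := A.max'_mem hAne
  have hjk : j < k := (Finset.mem_filter.mp hjA).1 |> Finset.mem_range.mp
  have hjmin : ∀ m ∈ Finset.range k, S j ≤ S m := (Finset.mem_filter.mp hjA).2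
  -- strict inequality beyond the last minimizer
  have hstrict : ∀ i', j < i' → i' < k → S j < S i' := by
    intro i' hji' hi'k
    by_contra h
    push_neg at h
    have hi'A : i' ∈ A := by
      simp only [hA, Finset.mem_filter, Finset.mem_range]
      exact ⟨hi'k, fun m hm => le_trans h (hjmin m (Finset.mem_range.mpr hm))⟩
    exact absurd (A.le_max' i' hi'A) (by omega)
  refine ⟨⟨j, hjk⟩, fun i hi1 hik => ?_⟩
  show 0 < ∑ ℓ ∈ Finset.range i, g (j + ℓ)
  have key : S j < S (j + i) := by
    by_cases hcase : j + i < k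
    · exact hstrict _ (by omega) hcase
    · -- j + i = k + r with r < k
      have hr : j + i = k + (j + i - k) := by omega
      have hrk : j + i - k < k := by omega
      have : S (k + (j + i - k)) = S k + S (j + i - k) := by
        rw [hSadd]
        congr 1
        exact Finset.sum_congr rfl fun ℓ _ => hgper ℓ
      rw [hr, this]
      have := hjmin (j + i - k) (Finset.mem_range.mpr hrk)
      linarith
  have := hSadd j i
  linarith
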